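/- arXiv:1307.1987 — 3 statements merged into one kernel-verified Lean document; each statement's English description precedes it below -/
import Mathlib

section
/- Let D be an abelian category with a distinguished Giraud subcategory (D, C, l, i), and let (T, F) be a torsion pair on C. Then the classes T̂ := { X ∈ D | l(X) ∈ T } and F̂ := { Y ∈ D | Y ∈ S^⊥ and l(Y) ∈ F } form a torsion pair (T̂, F̂) on D which moreover satisfies i(T) ⊆ T̂, i(F) ⊆ F̂, l(T̂) = T and l(F̂) = F. -/
open CategoryTheory Limits CategoryTheory.Pretriangulated

universe w'' w' w v'' u'' v' u' v u

namespace TiltedGiraudPaper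

section Basics

variable (C : Type u) [Category.{v} C]

/-- A class of objects is closed under extensions: for every short exact sequence,
if the two outer terms belong to the class, then so does the middle term. -/
def ClosedUnderExtensions [HasZeroMorphisms C] (P : Set C) : Prop :=
  ∀ S : ShortComplex C, S.ShortExact → S.X₁ ∈ P → S.X₃ ∈ P → S.X₂ ∈ P

/-- A class of objects is closed under (existing small) inductive limits. -/
def ClosedUnderColimits (P : Set C) : Prop :=
  ∀ {J : Type v} [SmallCategory J] {F : J ⥤ C} (c : Cocone F),
    IsColimit c → (∀ j, F.obj j ∈ P) → c.pt ∈ P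

/-- A class of objects is closed under (existing small) projective limits. -/
def ClosedUnderLimits (P : Set C) : Prop :=
  ∀ {J : Type v} [SmallCategory J] {F : J ⥤ C} (c : Cone F),
    IsLimit c → (∀ j, F.obj j ∈ P) → c.pt ∈ P

/-- A torsion class: a class of objects closed under inductive limits and extensions. -/
def IsTorsionClass [HasZeroMorphisms C] (P : Set C) : Prop :=
  ClosedUnderColimits C P ∧ ClosedUnderExtensions C P

/-- A torsion-free class: a class of objects closed under projective limits and extensions. -/
def IsTorsionFreeClass [HasZeroMorphisms C] (P : Set C) : Prop :=
  ClosedUnderLimits C P ∧ ClosedUnderExtensions C P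

/-- A Serre class: for every short exact sequence, the middle term belongs to the class
if and only if both outer terms do. -/
def IsSerreClass [HasZeroMorphisms C] (P : Set C) : Prop :=
  ∀ S : ShortComplex C, S.ShortExact → (S.X₂ ∈ P ↔ (S.X₁ ∈ P ∧ S.X₃ ∈ P))

/-- A torsion pair `(torsion, torsionFree)` on an abelian category: a torsion class and a
torsion-free class with no nonzero morphisms from the first to the second, such that every
object is an extension of a torsion-free object by a torsion object. -/
structure TorsionPair [HasZeroMorphisms C] where
  torsion : Set C
  torsionFree : Set C
  isTorsionClass : IsTorsionClass C torsion
  isTorsionFreeClass : IsTorsionFreeClass C torsionFree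
  hom_eq_zero : ∀ ⦃T F : C⦄, T ∈ torsion → F ∈ torsionFree → ∀ f : T ⟶ F, f = 0
  exists_ses : ∀ A : C, ∃ (T F : C) (f : T ⟶ A) (g : A ⟶ F) (w : f ≫ g = 0),
    T ∈ torsion ∧ F ∈ torsionFree ∧ (ShortComplex.mk f g w).ShortExact

end Basics

section Functors

variable {C : Type u} [Category.{v} C] {D : Type u'} [Category.{v'} D]

/-- The essential image of a class of objects under a functor. -/
def imageSet (L : C ⥤ D) (P : Set C) : Set D :=
  {Y | ∃ X, X ∈ P ∧ Nonempty (L.obj X ≅ Y)}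

/-- The preimage of a class of objects under a functor. -/
def preimageSet (L : C ⥤ D) (P : Set D) : Set C :=
  {X | L.obj X ∈ P}

/-- The kernel of a functor: the class of objects sent to a zero object. -/
def kerSet (L : C ⥤ D) : Set C :=
  {X | IsZero (L.obj X)}

end Functors

section Perp

variable {C : Type u} [Category.{v} C]

/-- `S^⊥`: the class of objects receiving no nonzero morphism from objects of `S`. -/
def rightPerp [HasZeroMorphisms C] (S : Set C) : Set C :=
  {Y | ∀ X ∈ S, ∀ f : X ⟶ Y, f = 0}

/-- `^⊥S`: the class of objects admitting no nonzero morphism to objects of `S`. -/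
def leftPerp [HasZeroMorphisms C] (S : Set C) : Set C :=
  {X | ∀ Y ∈ S, ∀ f : X ⟶ Y, f = 0}

/-- The class of morphisms whose kernel and cokernel belong to the class `S`. -/
def serreW [HasZeroMorphisms C] (S : Set C) : MorphismProperty C := fun X Y f =>
  (∃ (K : C) (k : K ⟶ X) (w : k ≫ f = 0), K ∈ S ∧ Nonempty (IsLimit (KernelFork.ofι k w))) ∧
  (∃ (Q : C) (q : Y ⟶ Q) (w : f ≫ q = 0), Q ∈ S ∧ Nonempty (IsColimit (CokernelCofork.ofπ q w)))

end Perp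

/-- `L : C ⥤ D` exhibits `D` as the (Gabriel) quotient of `C` by the Serre class `S`:
`L` is exact, essentially surjective, its kernel is exactly `S`, and `L` is a localization
of `C` at the class of morphisms with kernel and cokernel in `S`. -/
def IsSerreQuotient {C : Type u} [Category.{v} C] [HasZeroMorphisms C]
    {D : Type u'} [Category.{v'} D] (S : Set C) (L : C ⥤ D) : Prop :=
  Nonempty (PreservesFiniteLimits L) ∧ Nonempty (PreservesFiniteColimits L) ∧
  L.EssSurj ∧ (∀ X : C, IsZero (L.obj X) ↔ X ∈ S) ∧
  L.IsLocalization (serreW S)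

/-!
For `A : D` let `g : l A ⟶ F` be the torsion-free quotient of `l A` and `φ : A ⟶ i F` its
transpose. As `l` is left exact and the counit is invertible, `l (ker φ) ≅ ker g` is torsion,
while `coim φ` embeds into `i F ∈ (Ker l)^⊥`, so it lies in `F̂` because torsion-free classes are
closed under subobjects; `0 → ker φ → A → coim φ → 0` is the required sequence. Orthogonality
holds since the unit at an object of `(Ker l)^⊥` is a monomorphism. The same construction shows
`F̂ = T̂^⊥`, whence the closure properties of `F̂`, while `T̂` inherits those of `T` through the
exact, colimit-preserving functor `l`.
-/

section Closure

variable {C : Type u} [Category.{v} C]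

lemma ClosedUnderColimits.mem_of_iso {P : Set C} (hP : ClosedUnderColimits C P)
    {X Y : C} (e : X ≅ Y) (hX : X ∈ P) : Y ∈ P :=
  hP (J := Discrete PUnit) _
    ((isColimitConstCocone _ X).ofIsoColimit (Cocone.extendIso _ e)) fun _ => hX

lemma ClosedUnderLimits.mem_of_iso {P : Set C} (hP : ClosedUnderLimits C P)
    {X Y : C} (e : X ≅ Y) (hX : X ∈ P) : Y ∈ P :=
  hP (J := Discrete PUnit) _
    ((isLimitConstCone _ X).ofIsoLimit (Cone.extendIso _ e)) fun _ => hX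

lemma ClosedUnderColimits.preimageSet {D : Type u'} [Category.{v} D] {P : Set C}
    (hP : ClosedUnderColimits C P) (l : D ⥤ C) [PreservesColimitsOfSize.{v, v} l] :
    ClosedUnderColimits D (preimageSet l P) :=
  fun c hc hmem => hP (l.mapCocone c) (isColimitOfPreserves l hc) hmem

lemma ClosedUnderExtensions.preimageSet {D : Type u'} [Category.{v'} D] [Abelian D]
    [Abelian C] {P : Set C} (hP : ClosedUnderExtensions C P) (l : D ⥤ C)
    [PreservesFiniteLimits l] [PreservesFiniteColimits l] :
    ClosedUnderExtensions D (preimageSet l P) :=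
  fun S hS h₁ h₃ => hP (S.map l) (hS.map_of_exact l) h₁ h₃

lemma mem_rightPerp_of_mono [HasZeroMorphisms C] {S : Set C} {X Y : C} (m : X ⟶ Y) [Mono m]
    (hY : Y ∈ rightPerp S) : X ∈ rightPerp S :=
  fun K hK f => by rw [← cancel_mono m, zero_comp]; exact hY K hK _

lemma closedUnderLimits_rightPerp [HasZeroMorphisms C] (S : Set C) :
    ClosedUnderLimits C (rightPerp S) :=
  fun c hc hmem K hK _ => hc.hom_ext fun j => by rw [zero_comp]; exact hmem j K hK _

lemma closedUnderExtensions_rightPerp [Abelian C] (S : Set C) :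
    ClosedUnderExtensions C (rightPerp S) := by
  intro E hE h₁ h₃ K hK f
  have := hE.mono_f
  obtain ⟨f', hf'⟩ := hE.exact.lift' f (h₃ K hK _)
  rw [← hf', h₁ K hK f', zero_comp]

end Closure

namespace TorsionPair

variable {C : Type u} [Category.{v} C] [Abelian C] (p : TorsionPair C)

lemma mem_torsion_of_iso {X Y : C} (e : X ≅ Y) (hX : X ∈ p.torsion) : Y ∈ p.torsion :=
  ClosedUnderColimits.mem_of_iso p.isTorsionClass.1 e hX

lemma mem_torsionFree_of_iso {X Y : C} (e : X ≅ Y) (hX : X ∈ p.torsionFree) :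
    Y ∈ p.torsionFree :=
  ClosedUnderLimits.mem_of_iso p.isTorsionFreeClass.1 e hX

lemma torsionFree_eq_rightPerp : p.torsionFree = rightPerp p.torsion := by
  ext X
  refine ⟨fun hX T hT f => p.hom_eq_zero hT hX f, fun hX => ?_⟩
  obtain ⟨T, F, f, g, w, hT, hF, hE⟩ := p.exists_ses X
  have : Mono g := hE.exact.mono_g (hX T hT f)
  have : Epi g := hE.epi_g
  have : IsIso g := isIso_of_mono_of_epi g
  exact p.mem_torsionFree_of_iso (asIso g).symm hF

lemma mem_torsionFree_of_mono {X Y : C} (m : X ⟶ Y) [Mono m] (hY : Y ∈ p.torsionFree) :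
    X ∈ p.torsionFree := by
  rw [torsionFree_eq_rightPerp] at hY ⊢
  exact mem_rightPerp_of_mono m hY

lemma exists_kernel_mem_torsion (X : C) :
    ∃ (F : C) (g : X ⟶ F), F ∈ p.torsionFree ∧ kernel g ∈ p.torsion := by
  obtain ⟨T, F, f, g, w, hT, hF, hE⟩ := p.exists_ses X
  have : Mono f := hE.mono_f
  exact ⟨F, g, hF, p.mem_torsion_of_iso
    (hE.exact.fIsKernel.conePointUniqueUpToIso (limit.isLimit _)) hT⟩

end TorsionPair

lemma imageSet_eq_of_subset_preimageSet {D : Type u'} [Category.{v'} D] {C : Type u}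
    [Category.{v} C] {l : D ⥤ C} {i : C ⥤ D} (adj : l ⊣ i) [i.Full] [i.Faithful]
    {P : Set C} {Q : Set D} (hP : ∀ ⦃X Y : C⦄, (X ≅ Y) → X ∈ P → Y ∈ P)
    (hQ : Q ⊆ preimageSet l P) (hi : ∀ X ∈ P, i.obj X ∈ Q) : imageSet l Q = P := by
  ext Y
  refine ⟨fun ⟨X, hX, ⟨e⟩⟩ => hP e (hQ hX), fun hY => ?_⟩
  exact ⟨i.obj Y, hi Y hY, ⟨asIso (adj.counit.app Y)⟩⟩

section Giraud

variable {D : Type u'} [Category.{v} D] [Abelian D] {C : Type u} [Category.{v} C] [Abelian C]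
  {l : D ⥤ C} {i : C ⥤ D}

lemma obj_mem_rightPerp_kerSet (adj : l ⊣ i) (F : C) :
    i.obj F ∈ rightPerp (kerSet l) := by
  have := adj.isRightAdjoint
  intro K hK f
  rw [← (adj.homEquiv K F).apply_symm_apply f, (hK : IsZero (l.obj K)).eq_of_src
    ((adj.homEquiv K F).symm f) 0, Adjunction.homEquiv_unit, i.map_zero, comp_zero]

variable [PreservesFiniteLimits l] [i.Full] [i.Faithful]

noncomputable def mapKernelIso (adj : l ⊣ i) {A : D} {F : C} (φ : A ⟶ i.obj F) :
    l.obj (kernel φ) ≅ kernel ((adj.homEquiv A F).symm φ) :=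
  PreservesKernel.iso l φ ≪≫ (kernelCompMono (l.map φ) (adj.counit.app F)).symm ≪≫
    kernelIsoOfEq (adj.homEquiv_counit _ _ _).symm

lemma mono_unit_app_of_mem_rightPerp (adj : l ⊣ i) {Y : D}
    (hY : Y ∈ rightPerp (kerSet l)) : Mono (adj.unit.app Y) := by
  have hK : kernel (adj.unit.app Y) ∈ kerSet l := by
    refine IsZero.of_iso ?_ (mapKernelIso adj (adj.unit.app Y))
    simpa [Adjunction.homEquiv_counit] using isZero_kernel_of_mono (𝟙 (l.obj Y))
  exact Abelian.mono_of_kernel_ι_eq_zero _ (hY _ hK _)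

lemma hom_eq_zero_of_mem_preimageSet (adj : l ⊣ i) (p : TorsionPair C)
    {X Y : D} (hX : X ∈ preimageSet l p.torsion)
    (hY : Y ∈ preimageSet l p.torsionFree ∩ rightPerp (kerSet l)) (f : X ⟶ Y) : f = 0 := by
  have := mono_unit_app_of_mem_rightPerp adj hY.2
  rw [← cancel_mono (adj.unit.app Y), zero_comp, ← (adj.unit_naturality f : _ = _),
    p.hom_eq_zero hX hY.1 (l.map f), i.map_zero, comp_zero]

lemma mem_preimageSet_inter_rightPerp_of_mono (adj : l ⊣ i) (p : TorsionPair C) {Y : D} {F : C}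
    (m : Y ⟶ i.obj F) [Mono m] (hF : F ∈ p.torsionFree) :
    Y ∈ preimageSet l p.torsionFree ∩ rightPerp (kerSet l) :=
  ⟨p.mem_torsionFree_of_mono (l.map m ≫ adj.counit.app F) hF,
    mem_rightPerp_of_mono m (obj_mem_rightPerp_kerSet adj F)⟩

lemma exists_kernel_mem_preimageSet (adj : l ⊣ i) (p : TorsionPair C) (A : D) :
    ∃ (F : C) (φ : A ⟶ i.obj F), F ∈ p.torsionFree ∧ kernel φ ∈ preimageSet l p.torsion := by
  obtain ⟨F, g, hF, hg⟩ := p.exists_kernel_mem_torsion (l.obj A)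
  refine ⟨F, adj.homEquiv A F g, hF, p.mem_torsion_of_iso ?_ hg⟩
  exact (mapKernelIso adj _ ≪≫ kernelIsoOfEq ((adj.homEquiv A F).symm_apply_apply g)).symm

lemma preimageSet_inter_rightPerp_eq_rightPerp (adj : l ⊣ i) (p : TorsionPair C) :
    preimageSet l p.torsionFree ∩ rightPerp (kerSet l) = rightPerp (preimageSet l p.torsion) := by
  ext Y
  refine ⟨fun hY X hX f => hom_eq_zero_of_mem_preimageSet adj p hX hY f, fun hY => ?_⟩
  obtain ⟨F, φ, hF, hφ⟩ := exists_kernel_mem_preimageSet adj p Y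
  have := Abelian.mono_of_kernel_ι_eq_zero φ (hY _ hφ _)
  exact mem_preimageSet_inter_rightPerp_of_mono adj p φ hF

lemma exists_shortExact_preimageSet (adj : l ⊣ i) (p : TorsionPair C) (A : D) :
    ∃ (T F : D) (f : T ⟶ A) (g : A ⟶ F) (w : f ≫ g = 0),
      T ∈ preimageSet l p.torsion ∧ F ∈ preimageSet l p.torsionFree ∩ rightPerp (kerSet l) ∧
      (ShortComplex.mk f g w).ShortExact := by
  obtain ⟨F, φ, hF, hφ⟩ := exists_kernel_mem_preimageSet adj p A
  exact ⟨_, _, kernel.ι φ, Abelian.coimage.π φ, cokernel.condition _, hφ,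
    mem_preimageSet_inter_rightPerp_of_mono adj p (Abelian.factorThruCoimage φ) hF,
    ⟨ShortComplex.exact_of_g_is_cokernel _ (cokernelIsCokernel _)⟩⟩

def TorsionPair.lift (adj : l ⊣ i) (p : TorsionPair C) : TorsionPair D :=
  have := adj.leftAdjoint_preservesColimits
  { torsion := preimageSet l p.torsion
    torsionFree := preimageSet l p.torsionFree ∩ rightPerp (kerSet l)
    isTorsionClass :=
      ⟨ClosedUnderColimits.preimageSet p.isTorsionClass.1 l,
        ClosedUnderExtensions.preimageSet p.isTorsionClass.2 l⟩
    isTorsionFreeClass := by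
      rw [preimageSet_inter_rightPerp_eq_rightPerp adj p]
      exact ⟨closedUnderLimits_rightPerp _, closedUnderExtensions_rightPerp _⟩
    hom_eq_zero := fun _ _ => hom_eq_zero_of_mem_preimageSet adj p
    exists_ses := exists_shortExact_preimageSet adj p }

end Giraud

theorem torsionPair_lift_along_giraud_general
    {D : Type u} [Category.{v} D] [Abelian D]
    {C : Type u} [Category.{v} C] [Abelian C]
    (l : D ⥤ C) (i : C ⥤ D) (adj : l ⊣ i)
    [PreservesFiniteLimits l] [i.Full] [i.Faithful]
    (p : TorsionPair C) :
    ∃ q : TorsionPair D,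
      q.torsion = preimageSet l p.torsion ∧
      q.torsionFree = preimageSet l p.torsionFree ∩ rightPerp (kerSet l) ∧
      (∀ T ∈ p.torsion, i.obj T ∈ q.torsion) ∧
      (∀ F ∈ p.torsionFree, i.obj F ∈ q.torsionFree) ∧
      imageSet l q.torsion = p.torsion ∧
      imageSet l q.torsionFree = p.torsionFree := by
  have hiT : ∀ T ∈ p.torsion, i.obj T ∈ preimageSet l p.torsion :=
    fun T hT => p.mem_torsion_of_iso (asIso (adj.counit.app T)).symm hT
  have hiF : ∀ F ∈ p.torsionFree,
      i.obj F ∈ preimageSet l p.torsionFree ∩ rightPerp (kerSet l) :=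
    fun F hF => mem_preimageSet_inter_rightPerp_of_mono adj p (𝟙 _) hF
  refine ⟨p.lift adj, rfl, rfl, hiT, hiF, ?_, ?_⟩
  · exact imageSet_eq_of_subset_preimageSet adj (fun _ _ e => p.mem_torsion_of_iso e)
      subset_rfl hiT
  · exact imageSet_eq_of_subset_preimageSet adj (fun _ _ e => p.mem_torsionFree_of_iso e)
      Set.inter_subset_left hiF

/-- **Proposition.** Let `(D, C, l, i)` be a distinguished Giraud subcategory and `(T, F)`
a torsion pair on `C`.  Then `T̂ = l^←(T)` and `F̂ = l^←(F) ∩ (Ker l)^⊥` form a torsion pair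
on `D` with `i(T) ⊆ T̂`, `i(F) ⊆ F̂`, `l(T̂) = T` and `l(F̂) = F`. -/
theorem torsionPair_lift_along_giraud
    {D : Type u} [Category.{v} D] [Abelian D]
    {C : Type u} [Category.{v} C] [Abelian C]
    (l : D ⥤ C) (i : C ⥤ D) (adj : l ⊣ i)
    [PreservesFiniteLimits l] [PreservesFiniteColimits l] [i.Full] [i.Faithful]
    (p : TorsionPair C) :
    ∃ q : TorsionPair D,
      q.torsion = preimageSet l p.torsion ∧
      q.torsionFree = preimageSet l p.torsionFree ∩ rightPerp (kerSet l) ∧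
      (∀ T ∈ p.torsion, i.obj T ∈ q.torsion) ∧
      (∀ F ∈ p.torsionFree, i.obj F ∈ q.torsionFree) ∧
      imageSet l q.torsion = p.torsion ∧
      imageSet l q.torsionFree = p.torsionFree :=
  torsionPair_lift_along_giraud_general l i adj p

end TiltedGiraudPaper
end

section
/- Let D be an abelian category with a distinguished Giraud subcategory (D, C, l, i), endowed with a torsion pair (X, Y). Define l(X) := { T ∈ C | T ≅ l(X) for some X ∈ X } and l(Y) := { F ∈ C | F ≅ l(Y) for some Y ∈ Y }. Then (l(X), l(Y)) is a torsion pair on C if and only if il(Y) ⊆ Y; and in this case i^←(Y) = l(Y), where i^←(Y) := { C ∈ C | i(C) ∈ Y }. -/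
open CategoryTheory Limits CategoryTheory.Pretriangulated

universe w'' w' w v'' u'' v' u' v u

namespace TiltedGiraudPaper

/-! If `il(Y) ⊆ Y`, then `Hom(l X, l Y) ≅ Hom(X, il Y) = 0`, and applying the exact functor `l`
to the torsion decomposition of `i A` yields, through the counit `l i A ≅ A`, a decomposition of
any `A ∈ C`; Hom-orthogonal classes with decompositions always form a torsion pair. Conversely,
if `(l(X), l(Y))` is a torsion pair, then `Hom(X, i F) ≅ Hom(l X, F) = 0` for `F ∈ l(Y)`, so
`i F ∈ X^⊥ = Y`. -/

section Classes

variable {E : Type u} [Category.{v} E]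

lemma ClosedUnderLimits.isClosedUnderIsomorphisms {P : Set E} (hP : ClosedUnderLimits E P) :
    ObjectProperty.IsClosedUnderIsomorphisms P where
  of_iso e hX := hP _ ((isLimitConstCone (Discrete PUnit) _).ofIsoLimit (Cone.extendIso _ e))
    fun _ => hX

instance TorsionPair.isClosedUnderIsomorphisms_torsionFree [HasZeroMorphisms E]
    (p : TorsionPair E) : ObjectProperty.IsClosedUnderIsomorphisms p.torsionFree :=
  ClosedUnderLimits.isClosedUnderIsomorphisms p.isTorsionFreeClass.1

instance isClosedUnderIsomorphisms_imageSet {E' : Type u'} [Category.{v'} E'] (L : E' ⥤ E)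
    (P : Set E') : ObjectProperty.IsClosedUnderIsomorphisms (imageSet L P) where
  of_iso e := fun ⟨X, hX, ⟨e'⟩⟩ => ⟨X, hX, ⟨e' ≪≫ e⟩⟩

variable [Abelian E]

lemma isTorsionClass_leftPerp (S : Set E) : IsTorsionClass E (leftPerp S) := by
  refine ⟨fun c hc hmem Y hY f => hc.hom_ext fun j => ?_, fun T hT h₁ h₃ Y hY f => ?_⟩
  · rw [comp_zero]
    exact hmem j Y hY _
  · obtain ⟨φ, hφ⟩ := CokernelCofork.IsColimit.desc' hT.gIsCokernel f (h₁ Y hY _)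
    rw [← hφ, h₃ Y hY φ, comp_zero]

lemma isTorsionFreeClass_rightPerp (S : Set E) : IsTorsionFreeClass E (rightPerp S) := by
  refine ⟨fun c hc hmem Y hY f => hc.hom_ext fun j => ?_, fun T hT h₁ h₃ Y hY f => ?_⟩
  · rw [zero_comp]
    exact hmem j Y hY _
  · obtain ⟨φ, hφ⟩ := KernelFork.IsLimit.lift' hT.fIsKernel f (h₃ Y hY _)
    rw [← hφ, h₁ Y hY φ, zero_comp]

end Classes

section Decompositions

variable {E : Type u} [Category.{v} E] [Abelian E] {T F : Set E}

def HasTorsionDecompositions (T F : Set E) : Prop :=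
  ∀ A : E, ∃ (X Y : E) (f : X ⟶ A) (g : A ⟶ Y) (w : f ≫ g = 0),
    X ∈ T ∧ Y ∈ F ∧ (ShortComplex.mk f g w).ShortExact

lemma leftPerp_subset_of_hasTorsionDecompositions [ObjectProperty.IsClosedUnderIsomorphisms T]
    (h : HasTorsionDecompositions T F) : leftPerp F ⊆ T := by
  intro A hA
  obtain ⟨X, Y, f, g, w, hX, hY, hS⟩ := h A
  have : Epi f := hS.exact.epi_f (hA Y hY g)
  have := hS.mono_f
  have : IsIso f := isIso_of_mono_of_epi f
  exact ObjectProperty.prop_of_isIso T f hX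

lemma rightPerp_subset_of_hasTorsionDecompositions [ObjectProperty.IsClosedUnderIsomorphisms F]
    (h : HasTorsionDecompositions T F) : rightPerp T ⊆ F := by
  intro A hA
  obtain ⟨X, Y, f, g, w, hX, hY, hS⟩ := h A
  have : Mono g := hS.exact.mono_g (hA X hX f)
  have := hS.epi_g
  have : IsIso g := isIso_of_mono_of_epi g
  exact ObjectProperty.prop_of_isIso F (inv g) hY

/-- The closure properties come for free: the hypotheses force `T = ⊥F` and `F = T^⊥`. -/
def TorsionPair.ofHasTorsionDecompositions (T F : Set E)
    [ObjectProperty.IsClosedUnderIsomorphisms T] [ObjectProperty.IsClosedUnderIsomorphisms F]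
    (hom_eq_zero : ∀ ⦃X Y : E⦄, X ∈ T → Y ∈ F → ∀ f : X ⟶ Y, f = 0)
    (h : HasTorsionDecompositions T F) : TorsionPair E where
  torsion := T
  torsionFree := F
  isTorsionClass := by
    rw [← (leftPerp_subset_of_hasTorsionDecompositions h).antisymm
      fun X hX Y hY => hom_eq_zero hX hY]
    exact isTorsionClass_leftPerp F
  isTorsionFreeClass := by
    rw [← (rightPerp_subset_of_hasTorsionDecompositions h).antisymm
      fun Y hY X hX => hom_eq_zero hX hY]
    exact isTorsionFreeClass_rightPerp T
  hom_eq_zero := hom_eq_zero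
  exists_ses := h

lemma TorsionPair.rightPerp_torsion_subset (p : TorsionPair E) :
    rightPerp p.torsion ⊆ p.torsionFree :=
  rightPerp_subset_of_hasTorsionDecompositions p.exists_ses

end Decompositions

section Adjunction

variable {D : Type u} [Category.{v} D] {C : Type u'} [Category.{v'} C] {l : D ⥤ C} {i : C ⥤ D}
  (adj : l ⊣ i)
include adj

lemma preimageSet_eq_imageSet [i.Full] [i.Faithful] {F : Set D}
    [ObjectProperty.IsClosedUnderIsomorphisms F] (h : ∀ Y ∈ F, i.obj (l.obj Y) ∈ F) :
    preimageSet i F = imageSet l F := by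
  ext A
  refine ⟨fun hA => ⟨i.obj A, hA, ⟨asIso (adj.counit.app A)⟩⟩, ?_⟩
  rintro ⟨Y, hY, ⟨e⟩⟩
  exact ObjectProperty.prop_of_iso F (i.mapIso e) (h Y hY)

variable [HasZeroMorphisms D] [HasZeroMorphisms C]

lemma _root_.CategoryTheory.Adjunction.homEquiv_eq_zero_iff {X : D} {Y : C}
    (f : l.obj X ⟶ Y) : adj.homEquiv X Y f = 0 ↔ f = 0 := by
  have := adj.isLeftAdjoint
  have := adj.isRightAdjoint
  refine ⟨fun hf => ?_, fun hf => by simp [hf, Adjunction.homEquiv_unit]⟩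
  simpa [Adjunction.homEquiv_counit] using congrArg (adj.homEquiv X Y).symm hf

lemma _root_.CategoryTheory.Adjunction.homEquiv_symm_eq_zero_iff {X : D} {Y : C}
    (f : X ⟶ i.obj Y) : (adj.homEquiv X Y).symm f = 0 ↔ f = 0 := by
  rw [← adj.homEquiv_eq_zero_iff, Equiv.apply_symm_apply]

lemma imageSet_hom_eq_zero {T F : Set D} (h : ∀ Y ∈ F, i.obj (l.obj Y) ∈ rightPerp T) :
    ∀ ⦃X' Y' : C⦄, X' ∈ imageSet l T → Y' ∈ imageSet l F → ∀ f : X' ⟶ Y', f = 0 := by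
  rintro _ _ ⟨X, hX, ⟨eX⟩⟩ ⟨Y, hY, ⟨eY⟩⟩ f
  have : eX.hom ≫ f ≫ eY.inv = 0 := (adj.homEquiv_eq_zero_iff _).1 (h Y hY X hX _)
  simpa using eX.inv ≫= this =≫ eY.hom

end Adjunction

section AbelianAdjunction

variable {D : Type u} [Category.{v} D] [Abelian D] {C : Type u'} [Category.{v'} C] [Abelian C]
  {l : D ⥤ C} {i : C ⥤ D} (adj : l ⊣ i)
include adj

lemma hasTorsionDecompositions_imageSet [PreservesFiniteLimits l] [PreservesFiniteColimits l]
    [i.Full] [i.Faithful] {T F : Set D} (h : HasTorsionDecompositions T F) :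
    HasTorsionDecompositions (imageSet l T) (imageSet l F) := by
  intro A
  obtain ⟨X, Y, f, g, w, hX, hY, hS⟩ := h (i.obj A)
  let e : l.obj (i.obj A) ≅ A := asIso (adj.counit.app A)
  refine ⟨l.obj X, l.obj Y, l.map f ≫ e.hom, e.inv ≫ l.map g, by simp [← l.map_comp, w],
    ⟨X, hX, ⟨Iso.refl _⟩⟩, ⟨Y, hY, ⟨Iso.refl _⟩⟩, ?_⟩
  refine ShortComplex.shortExact_of_iso ?_ (hS.map_of_exact l)
  exact ShortComplex.isoMk (Iso.refl _) e (Iso.refl _) (Category.id_comp _)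
    ((e.hom_inv_id_assoc _).trans (Category.comp_id _).symm)

lemma exists_torsionPair_imageSet [PreservesFiniteLimits l] [PreservesFiniteColimits l]
    [i.Full] [i.Faithful] (p : TorsionPair D)
    (h : ∀ Y ∈ p.torsionFree, i.obj (l.obj Y) ∈ p.torsionFree) :
    ∃ q : TorsionPair C,
      q.torsion = imageSet l p.torsion ∧ q.torsionFree = imageSet l p.torsionFree :=
  ⟨.ofHasTorsionDecompositions _ _
    (imageSet_hom_eq_zero adj fun Y hY _ hX => p.hom_eq_zero hX (h Y hY))
    (hasTorsionDecompositions_imageSet adj p.exists_ses), rfl, rfl⟩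

lemma TorsionPair.rightAdjoint_obj_mem_torsionFree (p : TorsionPair D) (q : TorsionPair C)
    (hT : ∀ X ∈ p.torsion, l.obj X ∈ q.torsion) {B : C} (hB : B ∈ q.torsionFree) :
    i.obj B ∈ p.torsionFree :=
  p.rightPerp_torsion_subset fun X hX f =>
    (adj.homEquiv_symm_eq_zero_iff f).1 (q.hom_eq_zero (hT X hX) hB _)

end AbelianAdjunction

/-- **Proposition.** Let `(D, C, l, i)` be a distinguished Giraud subcategory and `(X, Y)`
a torsion pair on `D`.  Then `(l(X), l(Y))` (essential images) is a torsion pair on `C` if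
and only if `il(Y) ⊆ Y`; and in this case `i^←(Y) = l(Y)`. -/
theorem image_torsionPair_iff
    {D : Type u} [Category.{v} D] [Abelian D]
    {C : Type u} [Category.{v} C] [Abelian C]
    (l : D ⥤ C) (i : C ⥤ D) (adj : l ⊣ i)
    [PreservesFiniteLimits l] [PreservesFiniteColimits l] [i.Full] [i.Faithful]
    (p : TorsionPair D) :
    ((∃ q : TorsionPair C,
        q.torsion = imageSet l p.torsion ∧ q.torsionFree = imageSet l p.torsionFree) ↔
      (∀ Y ∈ p.torsionFree, i.obj (l.obj Y) ∈ p.torsionFree)) ∧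
    ((∀ Y ∈ p.torsionFree, i.obj (l.obj Y) ∈ p.torsionFree) →
      preimageSet i p.torsionFree = imageSet l p.torsionFree) := by
  refine ⟨⟨?_, exists_torsionPair_imageSet adj p⟩, preimageSet_eq_imageSet adj⟩
  rintro ⟨q, hT, hF⟩ Y hY
  exact p.rightAdjoint_obj_mem_torsionFree adj q (fun X hX => hT ▸ ⟨X, hX, ⟨Iso.refl _⟩⟩)
    (hF ▸ ⟨Y, hY, ⟨Iso.refl _⟩⟩)

end TiltedGiraudPaper
end

section
/- Let D be an abelian category with a distinguished co-Giraud subcategory (D, C, j, r), and let F be a torsion-free class in C. Then the class r^←(F) := { D ∈ D | r(D) ∈ F } is a torsion-free class on D. -/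
open CategoryTheory Limits CategoryTheory.Pretriangulated

universe w'' w' w v'' u'' v' u' v u

namespace TiltedGiraudPaper

section Preimage

variable {D : Type u} [Category.{v} D] {C : Type u'} [Category.{v} C]

theorem closedUnderLimits_preimageSet (r : D ⥤ C) [PreservesLimitsOfSize.{v, v} r]
    {P : Set C} (hP : ClosedUnderLimits C P) : ClosedUnderLimits D (preimageSet r P) :=
  fun c hc hmem => hP (r.mapCone c) (isLimitOfPreserves r hc) hmem

theorem closedUnderExtensions_preimageSet [HasZeroMorphisms D] [HasZeroMorphisms C] (r : D ⥤ C)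
    [r.PreservesZeroMorphisms] [PreservesFiniteLimits r] [PreservesFiniteColimits r]
    {P : Set C} (hP : ClosedUnderExtensions C P) : ClosedUnderExtensions D (preimageSet r P) :=
  fun S hS h₁ h₃ => hP (S.map r) (hS.map_of_exact r) h₁ h₃

theorem isTorsionFreeClass_preimageSet [HasZeroMorphisms D] [HasZeroMorphisms C] (r : D ⥤ C)
    [r.PreservesZeroMorphisms] [PreservesLimitsOfSize.{v, v} r] [PreservesFiniteColimits r]
    {P : Set C}
    (hP : IsTorsionFreeClass C P) : IsTorsionFreeClass D (preimageSet r P) :=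
  ⟨closedUnderLimits_preimageSet r hP.1, closedUnderExtensions_preimageSet r hP.2⟩

end Preimage

theorem preimage_torsionFree_of_coGiraud_general
    {D : Type u} [Category.{v} D] [Abelian D]
    {C : Type u} [Category.{v} C] [Abelian C]
    (j : C ⥤ D) (r : D ⥤ C) (adj : j ⊣ r)
    [PreservesFiniteColimits r]
    (F : Set C) (hF : IsTorsionFreeClass C F) :
    IsTorsionFreeClass D (preimageSet r F) :=
  have : PreservesLimitsOfSize.{v, v} r := adj.rightAdjoint_preservesLimits
  isTorsionFreeClass_preimageSet r hF

/-- **Corollary.** Let `(D, C, j, r)` be a distinguished co-Giraud subcategory and `F` a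
torsion-free class in `C`.  Then `r^←(F) = {X | r(X) ∈ F}` is a torsion-free class on `D`. -/
theorem preimage_torsionFree_of_coGiraud
    {D : Type u} [Category.{v} D] [Abelian D]
    {C : Type u} [Category.{v} C] [Abelian C]
    (j : C ⥤ D) (r : D ⥤ C) (adj : j ⊣ r)
    [PreservesFiniteLimits r] [PreservesFiniteColimits r] [j.Full] [j.Faithful]
    (F : Set C) (hF : IsTorsionFreeClass C F) :
    IsTorsionFreeClass D (preimageSet r F) :=
  preimage_torsionFree_of_coGiraud_general j r adj F hF

end TiltedGiraudPaper
end
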